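/- Let G consist of a clique Q on N-2 vertices and two nonadjacent peripheral vertices u and v, with u adjacent to a + 0 common neighbors plus none, and v adjacent to those same a vertices plus b further clique vertices, so c = 2a + b edges go from {u,v} into Q with a ≥ 1. Then the total clustering equals N - a(1 + 2(N-2-a) - b)/binom(N-1,2) - b(N-2-a-b)/binom(N-2,2). -/

import Mathlib

open SimpleGraph Finset

/-- Degree of a vertex (noncomputable, no decidability assumptions). -/
noncomputable def deg {V : Type*} [Fintype V] (G : SimpleGraph V) (u : V) : ℕ :=
  (G.neighborSet u).ncard

/-- Number of edges among the neighbors of `u` (as a rational, each edge counted once). -/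
noncomputable def triC {V : Type*} [Fintype V] (G : SimpleGraph V) (u : V) : ℚ :=
  ({p : V × V | G.Adj u p.1 ∧ G.Adj u p.2 ∧ G.Adj p.1 p.2}.ncard : ℚ) / 2

/-- Local clustering coefficient, with the convention that vertices of degree ≤ 1 have
clustering coefficient 1. -/
noncomputable def clust {V : Type*} [Fintype V] (G : SimpleGraph V) (u : V) : ℚ :=
  if deg G u ≤ 1 then 1 else triC G u / ((deg G u).choose 2)

/-- Sum of local clustering coefficients over all vertices. -/
noncomputable def totalClust {V : Type*} [Fintype V] (G : SimpleGraph V) : ℚ :=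
  ∑ u, clust G u

/-- Number of edges of a graph. -/
noncomputable def edgeCount {V : Type*} [Fintype V] (G : SimpleGraph V) : ℕ :=
  G.edgeSet.ncard

/-- Average distance of a (connected) graph: sum of pairwise shortest-path distances over
all unordered pairs of distinct vertices, divided by `N choose 2`.  (Ordered pairs are summed,
diagonal terms vanish, hence the factor 2.) -/
noncomputable def avgDist {V : Type*} [Fintype V] (G : SimpleGraph V) : ℚ :=
  (∑ u : V, ∑ v : V, (G.dist u v : ℚ)) / (2 * (Fintype.card V).choose 2)

/-- Type IIa almost complete graph: all vertices other than `u, v` form a clique,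
`u` and `v` are nonadjacent, `u` is adjacent exactly to the vertices of `A`, and `v` is
adjacent exactly to the vertices of `A ∪ B`. -/
def acGraphII {V : Type*} [DecidableEq V] (u v : V) (A B : Finset V) : SimpleGraph V where
  Adj x y := x ≠ y ∧
    ((x ≠ u ∧ x ≠ v ∧ y ≠ u ∧ y ≠ v) ∨
     (x = u ∧ y ∈ A) ∨ (y = u ∧ x ∈ A) ∨
     (x = v ∧ y ∈ A ∪ B) ∨ (y = v ∧ x ∈ A ∪ B))
  symm := ⟨by intro x y h; exact ⟨h.1.symm, by tauto⟩⟩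
  loopless := ⟨fun x h => h.1 rfl⟩

/-!
Write `clust w = 1 - (binom(d, 2) - triC w) / binom(d, 2)` with `d = deg w`. A vertex outside
`A ∪ B` (this includes `u` and `v`) is adjacent to neither `u` nor `v`, so its neighbourhood is a
clique and it contributes `1`. A vertex of `A` is adjacent to every other vertex and a vertex of
`B` to every vertex but `u`, so twice their `triC` counts the ordered adjacent pairs of the whole
graph, resp. of `G - u`, minus those through the vertex itself. Finally `G - u` is the clique on
`V \ {u, v}` with `v` joined to `A ∪ B`.
-/

section Clustering

variable {V : Type*} [Fintype V] (G : SimpleGraph V) [DecidableRel G.Adj]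

def adjPairCount (s : Finset V) : ℕ :=
  #{p ∈ s ×ˢ s | G.Adj p.1 p.2}

lemma deg_eq_degree (w : V) : deg G w = G.degree w := by
  rw [deg, ← card_neighborFinset_eq_degree, ← Set.ncard_coe_finset, coe_neighborFinset]

lemma triC_eq_adjPairCount (w : V) :
    triC G w = adjPairCount G (G.neighborFinset w) / 2 := by
  have : {p : V × V | G.Adj w p.1 ∧ G.Adj w p.2 ∧ G.Adj p.1 p.2} =
      ↑({p ∈ G.neighborFinset w ×ˢ G.neighborFinset w | G.Adj p.1 p.2}) := by
    ext p; simp [and_assoc]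
  rw [triC, this, Set.ncard_coe_finset, adjPairCount]

omit [DecidableRel G.Adj] in
/-- Valid also for `deg G w ≤ 1`, where both sides are `1` because the binomial vanishes and
division by zero gives zero. -/
lemma clust_eq_one_sub (w : V) :
    clust G w = 1 - ((deg G w).choose 2 - triC G w) / (deg G w).choose 2 := by
  unfold clust
  split_ifs with h
  · simp [Nat.choose_eq_zero_of_lt (show deg G w < 2 by omega)]
  · have : ((deg G w).choose 2 : ℚ) ≠ 0 := by
      exact_mod_cast (Nat.choose_pos (by omega)).ne'
    field_simp
    ring

omit [Fintype V] in
lemma adjPairCount_add_card_of_isClique {s : Finset V} (hs : G.IsClique (s : Set V)) :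
    adjPairCount G s + #s = #s * #s := by
  classical
  have : {p ∈ s ×ˢ s | G.Adj p.1 p.2} = s.offDiag := by
    ext ⟨x, y⟩
    simp only [mem_filter, mem_product, mem_offDiag]
    exact ⟨fun h => ⟨h.1.1, h.1.2, h.2.ne⟩, fun h => ⟨⟨h.1, h.2.1⟩, hs h.1 h.2.1 h.2.2⟩⟩
  rw [adjPairCount, this, offDiag_card, Nat.sub_add_cancel (Nat.le_mul_self _)]

lemma clust_eq_one_sub_div (w : V) {m : ℚ}
    (h : (adjPairCount G (G.neighborFinset w) : ℚ) + 2 * m = G.degree w * (G.degree w - 1)) :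
    clust G w = 1 - m / (G.degree w).choose 2 := by
  rw [clust_eq_one_sub, triC_eq_adjPairCount, deg_eq_degree, Nat.cast_choose_two]
  congr 2
  linear_combination -h / 2

lemma clust_eq_one_of_isClique (w : V) (h : G.IsClique (G.neighborSet w)) : clust G w = 1 := by
  have hP := adjPairCount_add_card_of_isClique G (s := G.neighborFinset w) (by
    rwa [coe_neighborFinset])
  rw [card_neighborFinset_eq_degree] at hP
  qify at hP
  rw [clust_eq_one_sub_div G w (m := 0) (by linear_combination hP)]
  simp

lemma adjPairCount_eq_erase [DecidableEq V] {s : Finset V} {x : V} (hx : x ∈ s)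
    (hN : G.neighborFinset x ⊆ s) :
    adjPairCount G s = adjPairCount G (s.erase x) + 2 * G.degree x := by
  have hsplit : {p ∈ s ×ˢ s | G.Adj p.1 p.2} = {p ∈ s.erase x ×ˢ s.erase x | G.Adj p.1 p.2} ∪
      (({x} ×ˢ G.neighborFinset x) ∪ (G.neighborFinset x ×ˢ {x})) := by
    ext ⟨y, z⟩
    have := @hN z
    have := @hN y
    simp only [mem_filter, mem_product, mem_erase, mem_union, mem_singleton,
      mem_neighborFinset] at *
    by_cases hy : y = x <;> by_cases hz : z = x <;> subst_vars <;> simp_all [G.adj_comm]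
  have hdisj : Disjoint {p ∈ s.erase x ×ˢ s.erase x | G.Adj p.1 p.2}
      (({x} ×ˢ G.neighborFinset x) ∪ (G.neighborFinset x ×ˢ {x})) := by
    rw [Finset.disjoint_left]
    rintro ⟨y, z⟩ h
    simp only [mem_filter, mem_product, mem_erase] at h
    simp [Ne.symm h.1.1.1, Ne.symm h.1.2.1]
  have hdisj' : Disjoint ({x} ×ˢ G.neighborFinset x) (G.neighborFinset x ×ˢ {x}) := by
    rw [Finset.disjoint_left]
    rintro ⟨y, z⟩ h
    simp_all
  rw [adjPairCount, adjPairCount, hsplit, card_union_of_disjoint hdisj,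
    card_union_of_disjoint hdisj', card_product, card_product, card_singleton,
    card_neighborFinset_eq_degree]
  ring

end Clustering

section AcGraphII

variable {V : Type*} [Fintype V] [DecidableEq V] {u v : V} {A B : Finset V}

instance (u v : V) (A B : Finset V) : DecidableRel (acGraphII u v A B).Adj :=
  fun _ _ => inferInstanceAs (Decidable (_ ∧ _))

local notation "𝒢" => acGraphII u v A B

omit [Fintype V] in
lemma acGraphII_adj {x y : V} : (𝒢).Adj x y ↔ x ≠ y ∧
    ((x ≠ u ∧ x ≠ v ∧ y ≠ u ∧ y ≠ v) ∨ (x = u ∧ y ∈ A) ∨ (y = u ∧ x ∈ A) ∨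
      (x = v ∧ y ∈ A ∪ B) ∨ (y = v ∧ x ∈ A ∪ B)) :=
  Iff.rfl

omit [Fintype V] in
lemma acGraphII_isClique {s : Set V} (hu : u ∉ s) (hv : v ∉ s) :
    (𝒢).IsClique s :=
  fun _ hx _ hy hxy => ⟨hxy, Or.inl ⟨ne_of_mem_of_not_mem hx hu, ne_of_mem_of_not_mem hx hv,
    ne_of_mem_of_not_mem hy hu, ne_of_mem_of_not_mem hy hv⟩⟩

lemma clust_acGraphII_of_notMem_union (hu : u ∉ A ∪ B) (hv : v ∉ A ∪ B) {w : V}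
    (hw : w ∉ A ∪ B) : clust 𝒢 w = 1 := by
  refine clust_eq_one_of_isClique _ w (acGraphII_isClique ?_ ?_)
  all_goals
    simp only [mem_union, not_or] at hu hv hw
    simp [acGraphII_adj, hu, hv, hw]

lemma neighborFinset_acGraphII_left (huv : u ≠ v) (hu : u ∉ A ∪ B) :
    (𝒢).neighborFinset u = A := by
  ext y
  simp only [mem_union, not_or] at hu
  by_cases hy : y = u <;> by_cases hyv : y = v <;> simp_all [acGraphII_adj, eq_comm]

lemma neighborFinset_acGraphII_right (hu : u ∉ A ∪ B) (hv : v ∉ A ∪ B) :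
    (𝒢).neighborFinset v = A ∪ B := by
  ext y
  simp only [mem_union, not_or] at hu hv
  by_cases hy : y = u <;> by_cases hyv : y = v <;> simp_all [acGraphII_adj, eq_comm]

lemma neighborFinset_acGraphII_of_mem_left (hu : u ∉ A ∪ B) (hv : v ∉ A ∪ B) {w : V}
    (hw : w ∈ A) : (𝒢).neighborFinset w = univ.erase w := by
  ext y
  simp only [mem_union, not_or] at hu hv
  have := ne_of_mem_of_not_mem hw hu.1
  have := ne_of_mem_of_not_mem hw hv.1
  by_cases hy : y = u <;> by_cases hyv : y = v <;> by_cases hyw : y = w <;>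
    simp_all [acGraphII_adj, eq_comm]

lemma neighborFinset_acGraphII_of_mem_right (huv : u ≠ v) (hu : u ∉ A ∪ B) (hv : v ∉ A ∪ B)
    (hAB : Disjoint A B) {w : V} (hw : w ∈ B) :
    (𝒢).neighborFinset w = (univ.erase u).erase w := by
  have hwA : w ∉ A := Finset.disjoint_right.mp hAB hw
  ext y
  simp only [mem_union, not_or] at hu hv
  have := ne_of_mem_of_not_mem hw hu.2
  have := ne_of_mem_of_not_mem hw hv.2
  by_cases hy : y = u <;> by_cases hyv : y = v <;> by_cases hyw : y = w <;>
    simp_all [acGraphII_adj, eq_comm]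

lemma adjPairCount_acGraphII_univ_erase (huv : u ≠ v) (hu : u ∉ A ∪ B) (hv : v ∉ A ∪ B)
    (hAB : Disjoint A B) :
    (adjPairCount 𝒢 (univ.erase u) : ℚ) =
      (Fintype.card V - 2) * (Fintype.card V - 3) + 2 * (#A + #B) := by
  set Q := (univ.erase u).erase v
  have hvQ : v ∈ univ.erase u := mem_erase.mpr ⟨huv.symm, mem_univ v⟩
  have hNv : (𝒢).neighborFinset v ⊆ univ.erase u := by
    rw [neighborFinset_acGraphII_right hu hv]
    exact fun y hy => mem_erase.mpr ⟨ne_of_mem_of_not_mem hy hu, mem_univ y⟩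
  have hdeg : (𝒢).degree v = #A + #B := by
    rw [← card_neighborFinset_eq_degree, neighborFinset_acGraphII_right hu hv,
      card_union_of_disjoint hAB]
  have hQ : adjPairCount 𝒢 Q + #Q = #Q * #Q :=
    adjPairCount_add_card_of_isClique 𝒢 (acGraphII_isClique (by simp [Q]) (by simp [Q]))
  have hcard : #Q + 2 = Fintype.card V := by
    rw [← card_univ, ← card_erase_add_one (mem_univ u), ← card_erase_add_one hvQ]
  rw [adjPairCount_eq_erase 𝒢 hvQ hNv, hdeg, ← hcard]
  qify at hQ
  push_cast
  linear_combination hQ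

lemma clust_acGraphII_of_mem_left (huv : u ≠ v) (hu : u ∉ A ∪ B) (hv : v ∉ A ∪ B)
    (hAB : Disjoint A B) {w : V} (hw : w ∈ A) :
    clust 𝒢 w = 1 - (1 + 2 * ((Fintype.card V : ℚ) - 2 - #A) - #B) /
      ((Fintype.card V - 1).choose 2 : ℚ) := by
  have hN := neighborFinset_acGraphII_of_mem_left hu hv hw
  have hdeg : (𝒢).degree w + 1 = Fintype.card V := by
    rw [← card_neighborFinset_eq_degree, hN, card_erase_add_one (mem_univ w), card_univ]
  have hdegu : (𝒢).degree u = #A := by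
    rw [← card_neighborFinset_eq_degree, neighborFinset_acGraphII_left huv hu]
  have hsplit : adjPairCount 𝒢 (univ.erase w) + 2 * (𝒢).degree w =
      adjPairCount 𝒢 (univ.erase u) + 2 * #A := by
    rw [← adjPairCount_eq_erase _ (mem_univ w) (subset_univ _), ← hdegu,
      ← adjPairCount_eq_erase _ (mem_univ u) (subset_univ _)]
  have hrest := adjPairCount_acGraphII_univ_erase huv hu hv hAB
  rw [← hdeg] at hrest
  rw [show Fintype.card V - 1 = (𝒢).degree w by omega, ← hdeg]
  apply clust_eq_one_sub_div
  rw [hN]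
  qify at hsplit
  push_cast at hrest ⊢
  linear_combination hsplit + hrest

lemma clust_acGraphII_of_mem_right (huv : u ≠ v) (hu : u ∉ A ∪ B) (hv : v ∉ A ∪ B)
    (hAB : Disjoint A B) {w : V} (hw : w ∈ B) :
    clust 𝒢 w = 1 - ((Fintype.card V : ℚ) - 2 - #A - #B) /
      ((Fintype.card V - 2).choose 2 : ℚ) := by
  have hN := neighborFinset_acGraphII_of_mem_right huv hu hv hAB hw
  have hwu : w ∈ univ.erase u :=
    mem_erase.mpr ⟨ne_of_mem_of_not_mem hw (notMem_union.mp hu).2, mem_univ w⟩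
  have hdeg : (𝒢).degree w + 2 = Fintype.card V := by
    have h₁ := card_erase_add_one hwu
    have h₂ := card_erase_add_one (mem_univ u)
    rw [← card_neighborFinset_eq_degree, hN, ← card_univ]
    omega
  have hsplit := adjPairCount_eq_erase _ hwu (hN ▸ erase_subset _ _)
  have hrest := adjPairCount_acGraphII_univ_erase huv hu hv hAB
  rw [← hdeg] at hrest
  rw [show Fintype.card V - 2 = (𝒢).degree w by omega, ← hdeg]
  apply clust_eq_one_sub_div
  rw [hN]
  qify at hsplit
  push_cast at hrest ⊢
  linear_combination hrest - hsplit

end AcGraphII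

theorem stmt13_general {V : Type*} [Fintype V] [DecidableEq V] (u v : V) (A B : Finset V)
    (huv : u ≠ v) (hu : u ∉ A ∪ B) (hv : v ∉ A ∪ B) (hAB : Disjoint A B) :
    totalClust (acGraphII u v A B) =
      (Fintype.card V : ℚ)
      - (A.card : ℚ) * (1 + 2 * ((Fintype.card V : ℚ) - 2 - A.card) - B.card) /
          ((Fintype.card V - 1).choose 2 : ℚ)
      - (B.card : ℚ) * ((Fintype.card V : ℚ) - 2 - A.card - B.card) /
          ((Fintype.card V - 2).choose 2 : ℚ) := by
  have hcard : (#(A ∪ B)ᶜ : ℚ) = Fintype.card V - #A - #B := by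
    have := congrArg (Nat.cast (R := ℚ)) (card_add_card_compl (A ∪ B))
    push_cast [card_union_of_disjoint hAB] at this
    linarith
  rw [totalClust, ← sum_add_sum_compl (A ∪ B), sum_union hAB,
    sum_congr rfl fun w hw => clust_acGraphII_of_mem_left huv hu hv hAB hw,
    sum_congr rfl fun w hw => clust_acGraphII_of_mem_right huv hu hv hAB hw,
    sum_congr rfl fun w hw => clust_acGraphII_of_notMem_union hu hv (mem_compl.mp hw)]
  simp only [sum_const, nsmul_eq_mul, mul_one, hcard]
  ring

/-- Total clustering of the type IIa almost complete graph with `a = |A|` common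
neighbors and `b = |B|` extra neighbors of `v`:
`N - a(1 + 2(N-2-a) - b)/((N-1) choose 2) - b(N-2-a-b)/((N-2) choose 2)`. -/
theorem stmt13 {V : Type*} [Fintype V] [DecidableEq V] (u v : V) (A B : Finset V)
    (huv : u ≠ v) (hu : u ∉ A ∪ B) (hv : v ∉ A ∪ B) (hAB : Disjoint A B)
    (ha : 1 ≤ A.card) (h5 : 5 ≤ Fintype.card V) :
    totalClust (acGraphII u v A B) =
      (Fintype.card V : ℚ)
      - (A.card : ℚ) * (1 + 2 * ((Fintype.card V : ℚ) - 2 - A.card) - B.card) /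
          ((Fintype.card V - 1).choose 2 : ℚ)
      - (B.card : ℚ) * ((Fintype.card V : ℚ) - 2 - A.card - B.card) /
          ((Fintype.card V - 2).choose 2 : ℚ) :=
  stmt13_general u v A B huv hu hv hAB
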